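/- arXiv:1904.04303 — 5 statements merged into one kernel-verified Lean document; each statement's English description precedes it below -/
import Mathlib

section
/- Let σ > 0, τ > 0 and σ₀ ∈ (0, σ), and set δ₀ = ((σ - σ₀)/τ)². Let V : [0, ∞) → ℝ be differentiable with V(t) ≥ 0 and V'(t) ≤ -σ V(t) + τ V(t)^{3/2} for all t ≥ 0. If V(0) < δ₀, then τ V(t)^{3/2} ≤ (σ - σ₀) V(t) and hence V'(t) ≤ -σ₀ V(t) hold for all t ≥ 0, and consequently V(t) ≤ V(0) e^{-σ₀ t} for all t ≥ 0. -/
/-!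
Below the level `δ₀` the cubic term is dominated, `τ V^{3/2} = τ √V · V ≤ (σ - σ₀) V`, so there
`V' ≤ -σ₀ V`. At the level `V = δ₀` itself this gives `V' ≤ -σ₀ δ₀ < 0`, so a barrier argument
keeps `V ≤ δ₀` for all time, and Grönwall's inequality applied to `V' ≤ -σ₀ V` gives the
exponential decay.
-/

open Real Set

theorem mul_rpow_three_halves_le_of_le_sq {x τ c : ℝ} (hx : 0 ≤ x) (hτ : 0 < τ) (hc : 0 ≤ c)
    (h : x ≤ (c / τ) ^ 2) : τ * x ^ ((3 : ℝ) / 2) ≤ c * x := by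
  have hsqrt : √x ≤ c / τ := Real.sqrt_le_iff.2 ⟨by positivity, h⟩
  have hpow : x ^ ((3 : ℝ) / 2) = √x * x := by
    rw [show (3 : ℝ) / 2 = 1 / 2 + 1 by norm_num, rpow_add' hx (by norm_num), rpow_one,
      sqrt_eq_rpow]
  calc τ * x ^ ((3 : ℝ) / 2) = τ * √x * x := by rw [hpow, mul_assoc]
    _ ≤ τ * (c / τ) * x := by gcongr
    _ = c * x := by field_simp

theorem le_of_deriv_neg_at_level {V : ℝ → ℝ} {c : ℝ}
    (hV : ∀ t, 0 ≤ t → DifferentiableAt ℝ V t) (hV0 : V 0 ≤ c)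
    (hlevel : ∀ t, 0 ≤ t → V t = c → deriv V t < 0) {t : ℝ} (ht : 0 ≤ t) : V t ≤ c :=
  image_le_of_deriv_right_lt_deriv_boundary (B := fun _ => c)
    (fun x hx => (hV x hx.1).continuousAt.continuousWithinAt)
    (fun x hx => (hV x hx.1).hasDerivAt.hasDerivWithinAt) hV0 (fun _ => hasDerivAt_const _ c)
    (fun x hx => hlevel x hx.1) ⟨ht, le_rfl⟩

theorem le_mul_exp_of_deriv_le_mul_self {V : ℝ → ℝ} {k : ℝ}
    (hV : ∀ t, 0 ≤ t → DifferentiableAt ℝ V t) (hderiv : ∀ t, 0 ≤ t → deriv V t ≤ k * V t)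
    {t : ℝ} (ht : 0 ≤ t) : V t ≤ V 0 * exp (k * t) := by
  have := le_gronwallBound_of_liminf_deriv_right_le (ε := 0)
    (fun x hx => (hV x hx.1).continuousAt.continuousWithinAt)
    (fun x hx _ hr => (hV x hx.1).hasDerivAt.hasDerivWithinAt.liminf_right_slope_le hr)
    le_rfl (fun x hx => by simpa using hderiv x hx.1) t ⟨ht, le_rfl⟩
  simpa [gronwallBound_ε0] using this

theorem lyapunov_comparison_decay_general
    (σ τ σ₀ : ℝ) (hτ : 0 < τ) (hσ₀ : 0 < σ₀) (hσ₀σ : σ₀ < σ)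
    (δ₀ : ℝ) (hδ₀ : δ₀ = ((σ - σ₀) / τ) ^ 2)
    (V : ℝ → ℝ)
    (hVdiff : ∀ t, 0 ≤ t → DifferentiableAt ℝ V t)
    (hVnonneg : ∀ t, 0 ≤ t → 0 ≤ V t)
    (hVineq : ∀ t, 0 ≤ t → deriv V t ≤ -σ * V t + τ * (V t) ^ ((3 : ℝ) / 2))
    (hV0 : V 0 < δ₀) :
    (∀ t, 0 ≤ t → τ * (V t) ^ ((3 : ℝ) / 2) ≤ (σ - σ₀) * V t ∧
      deriv V t ≤ -σ₀ * V t) ∧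
    (∀ t, 0 ≤ t → V t ≤ V 0 * Real.exp (-σ₀ * t)) := by
  have hgap : 0 ≤ σ - σ₀ := by linarith
  have hδ₀pos : 0 < δ₀ := hδ₀ ▸ pow_pos (div_pos (by linarith) hτ) 2
  have hdom : ∀ t, 0 ≤ t → V t ≤ δ₀ → τ * V t ^ ((3 : ℝ) / 2) ≤ (σ - σ₀) * V t :=
    fun t ht hle => mul_rpow_three_halves_le_of_le_sq (hVnonneg t ht) hτ hgap (hδ₀ ▸ hle)
  have hbelow : ∀ t, 0 ≤ t → V t ≤ δ₀ := fun t ht =>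
    le_of_deriv_neg_at_level hVdiff hV0.le (fun s hs hlevel => by
      have := mul_pos hσ₀ (hlevel ▸ hδ₀pos)
      linarith [hVineq s hs, hdom s hs hlevel.le]) ht
  have hderiv_le : ∀ t, 0 ≤ t → deriv V t ≤ -σ₀ * V t := fun t ht => by
    linarith [hVineq t ht, hdom t ht (hbelow t ht)]
  exact ⟨fun t ht => ⟨hdom t ht (hbelow t ht), hderiv_le t ht⟩,
    fun t ht => le_mul_exp_of_deriv_le_mul_self hVdiff hderiv_le ht⟩

/-- Lemma 2 of the paper: comparison-principle estimate for a Lyapunov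
functional satisfying `V' ≤ -σ V + τ V^(3/2)`.  With `δ₀ = ((σ - σ₀)/τ)²`
and `V 0 < δ₀`, the cubic term is dominated, `V' ≤ -σ₀ V`, and hence
`V t ≤ V 0 * exp (-σ₀ t)` for all `t ≥ 0`. -/
theorem lyapunov_comparison_decay
    (σ τ σ₀ : ℝ) (hσ : 0 < σ) (hτ : 0 < τ) (hσ₀ : 0 < σ₀) (hσ₀σ : σ₀ < σ)
    (δ₀ : ℝ) (hδ₀ : δ₀ = ((σ - σ₀) / τ) ^ 2)
    (V : ℝ → ℝ)
    (hVdiff : ∀ t, 0 ≤ t → DifferentiableAt ℝ V t)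
    (hVnonneg : ∀ t, 0 ≤ t → 0 ≤ V t)
    (hVineq : ∀ t, 0 ≤ t → deriv V t ≤ -σ * V t + τ * (V t) ^ ((3 : ℝ) / 2))
    (hV0 : V 0 < δ₀) :
    (∀ t, 0 ≤ t → τ * (V t) ^ ((3 : ℝ) / 2) ≤ (σ - σ₀) * V t ∧
      deriv V t ≤ -σ₀ * V t) ∧
    (∀ t, 0 ≤ t → V t ≤ V 0 * Real.exp (-σ₀ * t)) :=
  lyapunov_comparison_decay_general σ τ σ₀ hτ hσ₀ hσ₀σ δ₀ hδ₀ V hVdiff hVnonneg hVineq hV0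
end

section
/- Let L > 0 and l* ∈ (0, L), and set δ₁ = min{(L - l*)², (l*)²}. Let l : [0, ∞) → ℝ be continuous with 0 < l(0) < L, and let V : [0, ∞) → ℝ be continuous and nonnegative with (l(t) - l*)² ≤ V(t) for all t ≥ 0 and V(0) < δ₁. Assume that for every t* ≥ 0, if 0 < l(s) < L for all s ∈ [0, t*), then V(t*) ≤ V(0). Then 0 < l(t) < L for all t ≥ 0. -/
/-!
Let `t₀` be the first time at which `l` leaves the open interval `(0, L)`. Up to `t₀` the
interface is inside the segment, so `(l t₀ - l*)² ≤ V t₀ ≤ V 0 < δ₁`; by the choice of `δ₁` this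
keeps `l t₀` within distance `l*` of `l*` and within distance `L - l*` of `l*`, i.e. inside
`(0, L)`, contradicting the choice of `t₀`.
-/

open Set

theorem forall_ge_mem_of_forall_Ico_mem {α X : Type*} [ConditionallyCompleteLinearOrder α]
    [TopologicalSpace α] [OrderTopology α] [TopologicalSpace X] {f : α → X} (hf : Continuous f)
    {U : Set X} (hU : IsOpen U) {a : α}
    (h : ∀ t, a ≤ t → (∀ s, a ≤ s → s < t → f s ∈ U) → f t ∈ U) :
    ∀ t, a ≤ t → f t ∈ U := by
  by_contra! hbad
  set B := Ici a ∩ f ⁻¹' Uᶜ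
  have hBclosed : IsClosed B := isClosed_Ici.inter (hU.isClosed_compl.preimage hf)
  have hBbdd : BddBelow B := ⟨a, fun _ hs => hs.1⟩
  obtain ⟨hat₀, hfirst_bad⟩ : sInf B ∈ B := hBclosed.csInf_mem hbad hBbdd
  refine hfirst_bad (h _ hat₀ fun s has hst => ?_)
  by_contra hs
  exact (csInf_le hBbdd ⟨has, hs⟩).not_gt hst

theorem mem_Ioo_of_sq_sub_lt_min {x c L : ℝ} (hc : 0 < c) (hcL : c < L)
    (h : (x - c) ^ 2 < min ((L - c) ^ 2) (c ^ 2)) : x ∈ Ioo 0 L := by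
  have hleft := abs_lt_of_sq_lt_sq' (h.trans_le (min_le_right _ _)) hc.le
  have hright := abs_lt_of_sq_lt_sq' (h.trans_le (min_le_left _ _)) (sub_pos.2 hcL).le
  constructor <;> linarith [hleft.1, hright.2]

theorem interface_stays_in_segment_general
    (L lstar : ℝ) (hlstar : 0 < lstar) (hlstarL : lstar < L)
    (δ₁ : ℝ) (hδ₁ : δ₁ = min ((L - lstar) ^ 2) (lstar ^ 2))
    (l : ℝ → ℝ) (hlcont : Continuous l)
    (V : ℝ → ℝ)
    (hVbound : ∀ t, 0 ≤ t → (l t - lstar) ^ 2 ≤ V t)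
    (hV0 : V 0 < δ₁)
    (hVdecay : ∀ tstar, 0 ≤ tstar →
      (∀ s, 0 ≤ s → s < tstar → 0 < l s ∧ l s < L) → V tstar ≤ V 0) :
    ∀ t, 0 ≤ t → 0 < l t ∧ l t < L := by
  refine forall_ge_mem_of_forall_Ico_mem hlcont isOpen_Ioo fun t ht hinside => ?_
  refine mem_Ioo_of_sq_sub_lt_min hlstar hlstarL ?_
  calc (l t - lstar) ^ 2 ≤ V t := hVbound t ht
    _ ≤ V 0 := hVdecay t ht hinside
    _ < δ₁ := hV0
    _ = min ((L - lstar) ^ 2) (lstar ^ 2) := hδ₁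

/-- Lemma 3 of the paper (contradiction argument): the model-validity
condition `0 < l t < L` persists for all time, given that the Lyapunov
functional `V` bounds the squared interface deviation `(l t - l*)²`,
satisfies `V t* ≤ V 0` as long as the interface has remained inside the
segment, and starts below `δ₁ = min ((L - l*)², (l*)²)`. -/
theorem interface_stays_in_segment
    (L lstar : ℝ) (hL : 0 < L) (hlstar : 0 < lstar) (hlstarL : lstar < L)
    (δ₁ : ℝ) (hδ₁ : δ₁ = min ((L - lstar) ^ 2) (lstar ^ 2))
    (l : ℝ → ℝ) (hlcont : Continuous l)
    (hl0 : 0 < l 0 ∧ l 0 < L)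
    (V : ℝ → ℝ) (hVcont : Continuous V)
    (hVnonneg : ∀ t, 0 ≤ t → 0 ≤ V t)
    (hVbound : ∀ t, 0 ≤ t → (l t - lstar) ^ 2 ≤ V t)
    (hV0 : V 0 < δ₁)
    (hVdecay : ∀ tstar, 0 ≤ tstar →
      (∀ s, 0 ≤ s → s < tstar → 0 < l s ∧ l s < L) → V tstar ≤ V 0) :
    ∀ t, 0 ≤ t → 0 < l t ∧ l t < L :=
  interface_stays_in_segment_general L lstar hlstar hlstarL δ₁ hδ₁ l hlcont V hVbound hV0 hVdecay
end

section
/- Let u, b, K_f, K_c > 0, L > 0, l* ∈ ℝ, and let l : ℝ → ℝ be differentiable with 0 < l(t) < L/2 for all t; set X(t) = l(t) - l*. Let ρ̃_f, ρ̃_c : ℝ × ℝ → ℝ be continuously differentiable with ∂_t ρ̃_f = -u ∂_x ρ̃_f and ∂_t ρ̃_c = u ∂_x ρ̃_c everywhere, and suppose l'(t) = -b(ρ̃_f(l(t),t) + ρ̃_c(l(t),t)) for all t. Define w_f(x,t) = ρ̃_f(x,t) - K_f ( X(t) - (b/u)∫_x^{l(t)} ρ̃_f(ξ,t) dξ - (b/u)∫_{l(t)}^{2l(t)-x}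 ρ̃_c(ξ,t) dξ ). Then for all t and all x ∈ (0, l(t)): ∂_t w_f(x,t) + u ∂_x w_f(x,t) = (K_f b / u) l'(t) ( ρ̃_f(l(t),t) - ρ̃_c(l(t),t) + 2 ρ̃_c(2l(t)-x, t) ). -/
/-!
Solutions of the two transport equations are travelling waves,
`ρ̃_f(x, t) = ρ̃_f(x - u t, 0)` and `ρ̃_c(x, t) = ρ̃_c(x + u t, 0)`. Shifting the integration
variable turns the two integrals in `w_f` into integrals of the fixed initial profiles between
moving endpoints, so `w_f` is differentiable by the fundamental theorem of calculus and the chain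
rule. Along the characteristic direction `(u, 1)` the term `ρ̃_f` and the lower endpoint `x - u t`
are constant, and the remaining `-K_f l̇` is cancelled by the `-K_f b (ρ̃_f(l) + ρ̃_c(l))` coming
from the boundary terms at `l(t)`, by the Rankine–Hugoniot equation.
-/

open intervalIntegral

section Transport

variable {E : Type*} [NormedAddCommGroup E] [NormedSpace ℝ E] {f : ℝ × ℝ → E} {c : ℝ}

theorem eq_initial_profile_of_transport (hf : Differentiable ℝ f)
    (htransport : ∀ x t : ℝ, fderiv ℝ f (x, t) (0, 1) = c • fderiv ℝ f (x, t) (1, 0))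
    (x t : ℝ) : f (x, t) = f (x + c * t, 0) := by
  set γ : ℝ → ℝ × ℝ := fun τ => (x + c * t - c * τ, τ)
  have hγ : ∀ τ, HasDerivAt γ (-c, 1) τ := fun τ =>
    (((hasDerivAt_id τ).const_mul c).const_sub _ |>.congr_deriv (by simp)).prodMk
      (hasDerivAt_id τ)
  have hconst : ∀ τ, HasDerivAt (f ∘ γ) 0 τ := fun τ => by
    have hdir : ((-c, 1) : ℝ × ℝ) = (-c) • ((1 : ℝ), (0 : ℝ)) + ((0 : ℝ), (1 : ℝ)) := by simp
    have := (hf (γ τ)).hasFDerivAt.comp_hasDerivAt τ (hγ τ)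
    rwa [hdir, map_add, map_smul, htransport, neg_smul, neg_add_cancel] at this
  simpa [γ] using is_const_of_deriv_eq_zero (fun τ => (hconst τ).differentiableAt)
    (fun τ => (hconst τ).deriv) t 0

theorem integral_slice_eq_of_transport (hf : Differentiable ℝ f)
    (htransport : ∀ x t : ℝ, fderiv ℝ f (x, t) (0, 1) = c • fderiv ℝ f (x, t) (1, 0))
    (a b t : ℝ) : ∫ ξ in a..b, f (ξ, t) = ∫ s in a + c * t..b + c * t, f (s, 0) := by
  rw [← integral_comp_add_right (fun s => f (s, 0))]
  exact integral_congr fun ξ _ => eq_initial_profile_of_transport hf htransport ξ t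

end Transport

theorem HasFDerivAt.intervalIntegral_of_continuous {E : Type*} [NormedAddCommGroup E]
    [NormedSpace ℝ E] {g : ℝ → ℝ} (hg : Continuous g) {a b : E → ℝ} {a' b' : E →L[ℝ] ℝ} {p : E}
    (ha : HasFDerivAt a a' p) (hb : HasFDerivAt b b' p) :
    HasFDerivAt (fun q => ∫ s in a q..b q, g s) (g (b p) • b' - g (a p) • a') p := by
  set G : ℝ → ℝ := fun y => ∫ s in (0 : ℝ)..y, g s
  have hG : ∀ y, HasDerivAt G (g y) y := fun y => (hg.integral_hasStrictDerivAt 0 y).hasDerivAt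
  have hsplit : (fun q => ∫ s in a q..b q, g s) = fun q => G (b q) - G (a q) := funext fun q =>
    (integral_interval_sub_left (hg.intervalIntegrable _ _) (hg.intervalIntegrable _ _)).symm
  rw [hsplit]
  exact ((hG _).comp_hasFDerivAt p hb).sub ((hG _).comp_hasFDerivAt p ha)

theorem target_pde_free_regime_general
    (u b Kf lstar : ℝ)
    (hu : 0 < u)
    (l : ℝ → ℝ) (hl : Differentiable ℝ l)
    (X : ℝ → ℝ) (hX : ∀ t, X t = l t - lstar)
    (ρf ρc : ℝ × ℝ → ℝ) (hρf : ContDiff ℝ 1 ρf) (hρc : ContDiff ℝ 1 ρc)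
    (hpdef : ∀ x t : ℝ,
      fderiv ℝ ρf (x, t) ((0 : ℝ), (1 : ℝ)) =
        -u * fderiv ℝ ρf (x, t) ((1 : ℝ), (0 : ℝ)))
    (hpdec : ∀ x t : ℝ,
      fderiv ℝ ρc (x, t) ((0 : ℝ), (1 : ℝ)) =
        u * fderiv ℝ ρc (x, t) ((1 : ℝ), (0 : ℝ)))
    (hode : ∀ t, deriv l t = -b * (ρf (l t, t) + ρc (l t, t)))
    (wf : ℝ × ℝ → ℝ)
    (hwf : ∀ x t : ℝ, wf (x, t) =
      ρf (x, t) - Kf * (X t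
        - (b / u) * (∫ ξ in x..(l t), ρf (ξ, t))
        - (b / u) * (∫ ξ in (l t)..(2 * l t - x), ρc (ξ, t)))) :
    ∀ t : ℝ, ∀ x ∈ Set.Ioo (0 : ℝ) (l t),
      fderiv ℝ wf (x, t) ((0 : ℝ), (1 : ℝ)) +
        u * fderiv ℝ wf (x, t) ((1 : ℝ), (0 : ℝ)) =
      (Kf * b / u) * deriv l t *
        (ρf (l t, t) - ρc (l t, t) + 2 * ρc (2 * l t - x, t)) := by
  intro t x _
  have hρfd := hρf.differentiable one_ne_zero
  have hρcd := hρc.differentiable one_ne_zero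
  have hprofile_f : Continuous fun s => ρf (s, 0) :=
    hρf.continuous.comp (continuous_id.prodMk continuous_const)
  have hprofile_c : Continuous fun s => ρc (s, 0) :=
    hρc.continuous.comp (continuous_id.prodMk continuous_const)
  have hrepr : ∀ p : ℝ × ℝ, wf p = ρf p - Kf * (l p.2 - lstar
      - (b / u) * (∫ s in p.1 + -u * p.2..l p.2 + -u * p.2, ρf (s, 0))
      - (b / u) * (∫ s in l p.2 + u * p.2..2 * l p.2 - p.1 + u * p.2, ρc (s, 0))) := by
    rintro ⟨x, t⟩
    rw [hwf, hX, integral_slice_eq_of_transport hρfd hpdef,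
      integral_slice_eq_of_transport hρcd hpdec]
  have hfst : HasFDerivAt (fun p : ℝ × ℝ => p.1) (ContinuousLinearMap.fst ℝ ℝ ℝ) (x, t) :=
    hasFDerivAt_fst
  have hsnd : HasFDerivAt (fun p : ℝ × ℝ => p.2) (ContinuousLinearMap.snd ℝ ℝ ℝ) (x, t) :=
    hasFDerivAt_snd
  have hlt : HasFDerivAt (fun p : ℝ × ℝ => l p.2) (deriv l t • ContinuousLinearMap.snd ℝ ℝ ℝ)
      (x, t) := (hl t).hasDerivAt.comp_hasFDerivAt (x, t) hsnd
  have hut := hsnd.const_mul u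
  have hderiv := (hρfd (x, t)).hasFDerivAt.sub (((hlt.sub_const lstar).sub
    ((HasFDerivAt.intervalIntegral_of_continuous hprofile_f
      (hfst.add (hsnd.const_mul (-u))) (hlt.add (hsnd.const_mul (-u)))).const_mul (b / u))).sub
    ((HasFDerivAt.intervalIntegral_of_continuous hprofile_c (hlt.add hut)
      (((hlt.const_mul 2).sub hfst).add hut)).const_mul (b / u)) |>.const_mul Kf)
    |>.congr_of_eventuallyEq (f₁ := wf) (.of_forall hrepr)
  rw [hderiv.fderiv]
  simp only [sub_apply, add_apply, smul_apply, ContinuousLinearMap.coe_fst',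
    ContinuousLinearMap.coe_snd', Pi.add_apply, Pi.sub_apply, smul_eq_mul]
  rw [hpdef, hode, ← eq_initial_profile_of_transport hρfd hpdef,
    ← eq_initial_profile_of_transport hρcd hpdec, ← eq_initial_profile_of_transport hρcd hpdec]
  field_simp
  ring

/-- Target PDE for the free-regime backstepping variable in the case
`l(t) ∈ (0, L/2)`: the transformed state `w_f` satisfies
`∂_t w_f + u ∂_x w_f = (K_f b/u) l̇(t) (ρ̃_f(l,t) - ρ̃_c(l,t) + 2ρ̃_c(2l-x,t))`
for `x ∈ (0, l(t))`. -/
theorem target_pde_free_regime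
    (u b Kf Kc L lstar : ℝ)
    (hu : 0 < u) (hb : 0 < b) (hKf : 0 < Kf) (hKc : 0 < Kc) (hL : 0 < L)
    (l : ℝ → ℝ) (hl : Differentiable ℝ l)
    (hlrange : ∀ t, 0 < l t ∧ l t < L / 2)
    (X : ℝ → ℝ) (hX : ∀ t, X t = l t - lstar)
    (ρf ρc : ℝ × ℝ → ℝ) (hρf : ContDiff ℝ 1 ρf) (hρc : ContDiff ℝ 1 ρc)
    (hpdef : ∀ x t : ℝ,
      fderiv ℝ ρf (x, t) ((0 : ℝ), (1 : ℝ)) =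
        -u * fderiv ℝ ρf (x, t) ((1 : ℝ), (0 : ℝ)))
    (hpdec : ∀ x t : ℝ,
      fderiv ℝ ρc (x, t) ((0 : ℝ), (1 : ℝ)) =
        u * fderiv ℝ ρc (x, t) ((1 : ℝ), (0 : ℝ)))
    (hode : ∀ t, deriv l t = -b * (ρf (l t, t) + ρc (l t, t)))
    (wf : ℝ × ℝ → ℝ)
    (hwf : ∀ x t : ℝ, wf (x, t) =
      ρf (x, t) - Kf * (X t
        - (b / u) * (∫ ξ in x..(l t), ρf (ξ, t))
        - (b / u) * (∫ ξ in (l t)..(2 * l t - x), ρc (ξ, t)))) :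
    ∀ t : ℝ, ∀ x ∈ Set.Ioo (0 : ℝ) (l t),
      fderiv ℝ wf (x, t) ((0 : ℝ), (1 : ℝ)) +
        u * fderiv ℝ wf (x, t) ((1 : ℝ), (0 : ℝ)) =
      (Kf * b / u) * deriv l t *
        (ρf (l t, t) - ρc (l t, t) + 2 * ρc (2 * l t - x, t)) :=
  target_pde_free_regime_general u b Kf lstar hu l hl X hX ρf ρc hρf hρc hpdef hpdec hode wf hwf
end

section
/- Let u > 0, let l : ℝ → ℝ be differentiable with l(t) > 0 for all t, and let w, F : ℝ × ℝ → ℝ with w continuously differentiable and satisfying ∂_t w(x,t) + u ∂_x w(x,t) = F(x,t) for all (x,t). Then for every t, d/dt ∫_0^{l(t)} e^{-x} w(x,t)² dx = -u ∫_0^{l(t)} e^{-x} w(x,t)² dx - (u - l'(t)) e^{-l(t)} w(l(t),t)² + u w(0,t)² + 2 ∫_0^{l(t)} e^{-x} w(x,t) F(x,t) dx. -/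
/-!
Split `∫₀^{l s} = ∫₀^{l t} + ∫_{l t}^{l s}`: the first piece is differentiated under the integral
sign, the second contributes `l'(t) e^{-l(t)} w(l(t),t)²` by the fundamental theorem of calculus
applied jointly in the upper limit and the parameter. In the remaining integral the transport
equation trades `∂ₜ w` for `F - u ∂ₓ w`, and `2 e^{-x} w ∂ₓ w = e^{-x} ∂ₓ (w²)` is integrated by
parts, producing the boundary terms and the damping `-u ∫ e^{-x} w²`.
-/

open MeasureTheory Set Filter Real
open scoped Interval

section PartialDerivatives

variable {E : Type*} [NormedAddCommGroup E] [NormedSpace ℝ E] {w : ℝ × ℝ → E} {x t : ℝ}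

theorem DifferentiableAt.hasDerivAt_partial_fst (hw : DifferentiableAt ℝ w (x, t)) :
    HasDerivAt (fun y => w (y, t)) (fderiv ℝ w (x, t) (1, 0)) x :=
  hw.hasFDerivAt.comp_hasDerivAt x ((hasDerivAt_id x).prodMk (hasDerivAt_const x t))

theorem DifferentiableAt.hasDerivAt_partial_snd (hw : DifferentiableAt ℝ w (x, t)) :
    HasDerivAt (fun s => w (x, s)) (fderiv ℝ w (x, t) (0, 1)) t :=
  hw.hasFDerivAt.comp_hasDerivAt t ((hasDerivAt_const t x).prodMk (hasDerivAt_id t))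

end PartialDerivatives

section Leibniz

variable {E : Type*} [NormedAddCommGroup E] [NormedSpace ℝ E] {g g' : ℝ × ℝ → E}

theorem hasFDerivAt_integral_param_upper [CompleteSpace E] (hg : Continuous g) (a t : ℝ) :
    HasFDerivAt (fun p : ℝ × ℝ => ∫ x in a..p.1, g (x, p.2))
      ((ContinuousLinearMap.fst ℝ ℝ ℝ).smulRight (g (a, t))) (a, t) := by
  rw [hasFDerivAt_iff_isLittleO_nhds_zero, Asymptotics.isLittleO_iff]
  intro c hc
  obtain ⟨δ, hδ, hgδ⟩ := Metric.continuousAt_iff.1 hg.continuousAt c hc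
  filter_upwards [Metric.ball_mem_nhds (0 : ℝ × ℝ) hδ] with h hh
  rw [mem_ball_zero_iff] at hh
  have hclose : ∀ x ∈ Ι a (a + h.1), ‖g (x, t + h.2) - g (a, t)‖ ≤ c := by
    intro x hx
    have hxa : |x - a| ≤ |h.1| := by
      simpa using abs_sub_left_of_mem_uIcc (uIoc_subset_uIcc hx)
    rw [← dist_eq_norm]
    refine (hgδ ?_).le
    rw [Prod.dist_eq, Real.dist_eq, Real.dist_eq, add_sub_cancel_left]
    exact max_lt (hxa.trans_lt ((norm_fst_le h).trans_lt hh)) ((norm_snd_le h).trans_lt hh)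
  have hslice : Continuous fun x => g (x, t + h.2) := by fun_prop
  simp only [Prod.fst_add, Prod.snd_add, ContinuousLinearMap.smulRight_apply,
    ContinuousLinearMap.coe_fst']
  calc ‖(∫ x in a..(a + h.1), g (x, t + h.2)) - (∫ x in a..a, g (x, t)) - h.1 • g (a, t)‖
      = ‖∫ x in a..(a + h.1), (g (x, t + h.2) - g (a, t))‖ := by
        rw [intervalIntegral.integral_sub (hslice.intervalIntegrable _ _) intervalIntegrable_const,
          intervalIntegral.integral_const, intervalIntegral.integral_same, add_sub_cancel_left,
          sub_zero]
    _ ≤ c * |a + h.1 - a| := intervalIntegral.norm_integral_le_of_norm_le_const hclose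
    _ ≤ c * ‖h‖ := by
        rw [add_sub_cancel_left]
        exact mul_le_mul_of_nonneg_left (norm_fst_le h) hc.le

theorem hasDerivAt_integral_param (hg : Continuous g) (hg' : Continuous g')
    (hderiv : ∀ x s, HasDerivAt (fun s => g (x, s)) (g' (x, s)) s) (a b t : ℝ) :
    HasDerivAt (fun s => ∫ x in a..b, g (x, s)) (∫ x in a..b, g' (x, t)) t := by
  obtain ⟨C, hC⟩ := ((isCompact_uIcc (a := a) (b := b)).prod
    (isCompact_closedBall t 1)).exists_bound_of_continuousOn hg'.continuousOn
  refine (intervalIntegral.hasDerivAt_integral_of_dominated_loc_of_deriv_le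
    (F' := fun s x => g' (x, s)) (bound := fun _ => C) (Metric.ball_mem_nhds t one_pos)
    (Eventually.of_forall fun s =>
      (by fun_prop : Continuous fun x => g (x, s)).aestronglyMeasurable)
    ((by fun_prop : Continuous fun x => g (x, t)).intervalIntegrable _ _)
    (by fun_prop : Continuous fun x => g' (x, t)).aestronglyMeasurable
    (ae_of_all _ fun x hx s hs => hC (x, s) ⟨uIoc_subset_uIcc hx, Metric.ball_subset_closedBall hs⟩)
    intervalIntegrable_const (ae_of_all _ fun x _ s _ => hderiv x s)).2

theorem hasDerivAt_integral_moving_upper_limit [CompleteSpace E] (hg : Continuous g)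
    (hg' : Continuous g') (hderiv : ∀ x s, HasDerivAt (fun s => g (x, s)) (g' (x, s)) s)
    {l : ℝ → ℝ} {l' t : ℝ} (hl : HasDerivAt l l' t) (a : ℝ) :
    HasDerivAt (fun s => ∫ x in a..l s, g (x, s))
      (l' • g (l t, t) + ∫ x in a..l t, g' (x, t)) t := by
  have hfixed := hasDerivAt_integral_param hg hg' hderiv a (l t) t
  have hmoving : HasDerivAt (fun s => ∫ x in l t..l s, g (x, s)) (l' • g (l t, t)) t := by
    have hcurve : HasDerivAt (fun s => (l s, s)) (l', 1) t := hl.prodMk (hasDerivAt_id t)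
    exact (hasFDerivAt_integral_param_upper hg (l t) t).comp_hasDerivAt_of_eq t hcurve rfl
  have hsplit : ∀ s, ∫ x in a..l s, g (x, s)
      = (∫ x in a..l t, g (x, s)) + ∫ x in l t..l s, g (x, s) :=
    fun s => (intervalIntegral.integral_add_adjacent_intervals
      ((by fun_prop : Continuous fun x => g (x, s)).intervalIntegrable _ _)
      ((by fun_prop : Continuous fun x => g (x, s)).intervalIntegrable _ _)).symm
  simp only [hsplit]
  rw [add_comm]
  exact hfixed.add hmoving

end Leibniz

theorem integral_exp_neg_mul_deriv_sq {f f' : ℝ → ℝ} {a b : ℝ}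
    (hf : ∀ x ∈ [[a, b]], HasDerivAt f (f' x) x) (hf' : IntervalIntegrable f' volume a b) :
    ∫ x in a..b, exp (-x) * (2 * f x * f' x)
      = exp (-b) * f b ^ 2 - exp (-a) * f a ^ 2 + ∫ x in a..b, exp (-x) * f x ^ 2 := by
  have hfc : ContinuousOn f [[a, b]] := fun x hx => (hf x hx).continuousAt.continuousWithinAt
  have hibp := intervalIntegral.integral_mul_deriv_eq_deriv_mul
    (u := fun x => exp (-x)) (u' := fun x => -exp (-x))
    (v := fun x => f x ^ 2) (v' := fun x => 2 * f x * f' x)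
    (fun x _ => by simpa using (hasDerivAt_neg x).exp)
    (fun x hx => by simpa using (hf x hx).fun_pow 2)
    ((by fun_prop : Continuous fun x => -exp (-x)).intervalIntegrable _ _)
    (hf'.continuousOn_mul ((continuousOn_const.mul hfc)))
  rw [hibp, sub_eq_add_neg, ← intervalIntegral.integral_neg]
  simp only [neg_mul, neg_neg]

theorem weighted_energy_derivative_moving_upper_limit_general
    (u : ℝ)
    (l : ℝ → ℝ) (hl : Differentiable ℝ l)
    (w F : ℝ × ℝ → ℝ) (hw : ContDiff ℝ 1 w)
    (hpde : ∀ x t : ℝ,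
      fderiv ℝ w (x, t) ((0 : ℝ), (1 : ℝ)) +
        u * fderiv ℝ w (x, t) ((1 : ℝ), (0 : ℝ)) = F (x, t)) :
    ∀ t : ℝ,
      HasDerivAt (fun s => ∫ x in (0 : ℝ)..(l s), Real.exp (-x) * (w (x, s)) ^ 2)
        (-u * (∫ x in (0 : ℝ)..(l t), Real.exp (-x) * (w (x, t)) ^ 2)
          - (u - deriv l t) * Real.exp (-(l t)) * (w (l t, t)) ^ 2
          + u * (w (0, t)) ^ 2
          + 2 * ∫ x in (0 : ℝ)..(l t), Real.exp (-x) * w (x, t) * F (x, t)) t := by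
  intro t
  have hwd : Differentiable ℝ w := hw.differentiable one_ne_zero
  have hpartial (v : ℝ × ℝ) : Continuous fun p => fderiv ℝ w p v :=
    (hw.continuous_fderiv one_ne_zero).clm_apply continuous_const
  have hwc := hw.continuous
  have hwt := hpartial (0, 1)
  have hwx := hpartial (1, 0)
  have hF : Continuous F := by
    rw [show F = fun p => fderiv ℝ w p (0, 1) + u * fderiv ℝ w p (1, 0) from
      funext fun p => (hpde p.1 p.2).symm]
    fun_prop
  have hleibniz := hasDerivAt_integral_moving_upper_limit
    (g := fun p => exp (-p.1) * w p ^ 2)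
    (g' := fun p => exp (-p.1) * (2 * w p * fderiv ℝ w p (0, 1))) (by fun_prop) (by fun_prop)
    (fun x s => by simpa using ((hwd (x, s)).hasDerivAt_partial_snd.pow 2).const_mul (exp (-x)))
    (hl t).hasDerivAt 0
  have hibp := integral_exp_neg_mul_deriv_sq (a := 0) (b := l t)
    (fun x _ => (hwd (x, t)).hasDerivAt_partial_fst)
    ((by fun_prop : Continuous fun x => fderiv ℝ w (x, t) (1, 0)).intervalIntegrable _ _)
  have htransport : ∫ x in (0 : ℝ)..l t, exp (-x) * (2 * w (x, t) * fderiv ℝ w (x, t) (0, 1))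
      = 2 * (∫ x in (0 : ℝ)..l t, exp (-x) * w (x, t) * F (x, t))
        - u * ∫ x in (0 : ℝ)..l t, exp (-x) * (2 * w (x, t) * fderiv ℝ w (x, t) (1, 0)) := by
    rw [← intervalIntegral.integral_const_mul, ← intervalIntegral.integral_const_mul,
      ← intervalIntegral.integral_sub]
    · congr 1 with x
      rw [← hpde x t]
      ring
    all_goals exact (by fun_prop : Continuous _).intervalIntegrable _ _
  refine hleibniz.congr_deriv ?_
  rw [smul_eq_mul, htransport, hibp, neg_zero, exp_zero]
  ring

/-- Leibniz rule plus integration by parts for the exponentially weighted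
energy on the moving domain `[0, l(t)]` of a solution of the rightward
forced transport equation `∂_t w + u ∂_x w = F`. -/
theorem weighted_energy_derivative_moving_upper_limit
    (u : ℝ) (hu : 0 < u)
    (l : ℝ → ℝ) (hl : Differentiable ℝ l) (hlpos : ∀ t, 0 < l t)
    (w F : ℝ × ℝ → ℝ) (hw : ContDiff ℝ 1 w)
    (hpde : ∀ x t : ℝ,
      fderiv ℝ w (x, t) ((0 : ℝ), (1 : ℝ)) +
        u * fderiv ℝ w (x, t) ((1 : ℝ), (0 : ℝ)) = F (x, t)) :
    ∀ t : ℝ,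
      HasDerivAt (fun s => ∫ x in (0 : ℝ)..(l s), Real.exp (-x) * (w (x, s)) ^ 2)
        (-u * (∫ x in (0 : ℝ)..(l t), Real.exp (-x) * (w (x, t)) ^ 2)
          - (u - deriv l t) * Real.exp (-(l t)) * (w (l t, t)) ^ 2
          + u * (w (0, t)) ^ 2
          + 2 * ∫ x in (0 : ℝ)..(l t), Real.exp (-x) * w (x, t) * F (x, t)) t :=
  weighted_energy_derivative_moving_upper_limit_general u l hl w F hw hpde
end

section
/- Let u > 0, L ∈ ℝ, let l : ℝ → ℝ be differentiable with l(t) < L for all t, and let w, F : ℝ × ℝ → ℝ with w continuously differentiable and satisfying ∂_t w(x,t) - u ∂_x w(x,t) = F(x,t) for all (x,t). Then for every t, d/dt ∫_{l(t)}^{L} e^{x-L} w(x,t)² dx = -u ∫_{l(t)}^{L} e^{x-L} w(x,t)² dx - (u + l'(t)) e^{l(t)-L} w(l(t),t)² + u w(L,t)² + 2 ∫_{l(t)}^{L} e^{x-L} w(x,t) F(x,t) dx. -/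
/-!
Write `Φ(y, s) = ∫_y^L e^{x-L} w(x,s)² dx`. Both partial derivatives of `Φ` are continuous
(the fundamental theorem of calculus in `y`, differentiation under the integral sign in `s`),
so `Φ` is differentiable and the chain rule along `s ↦ (l s, s)` gives the Leibniz rule for the
moving lower limit. Substituting `∂ₜw = F + u ∂ₓw`, the term `u ∫ e^{x-L} 2 w ∂ₓw` is integrated
by parts; since the weight is its own derivative this produces `-u ∫ e^{x-L} w²` and the
boundary terms.
-/

open MeasureTheory Set Real

section ParametricIntegral

variable {E : Type*} [NormedAddCommGroup E] [NormedSpace ℝ E] {f f' : ℝ → ℝ → E}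

theorem continuous_parametric_intervalIntegral_lowerLimit (hf : Continuous ↿f) (b : ℝ) :
    Continuous fun p : ℝ × ℝ => ∫ x in p.1..b, f p.2 x := by
  have := (intervalIntegral.continuous_parametric_intervalIntegral_of_continuous (a₀ := b)
    (μ := volume) (f := fun p : ℝ × ℝ => f p.2)
    (hf.comp (continuous_snd.fst'.prodMk continuous_snd)) continuous_fst).neg
  exact this.congr fun p => by simp [intervalIntegral.integral_symm p.1 b]

theorem hasDerivAt_parametric_intervalIntegral (hf : Continuous ↿f) (hf' : Continuous ↿f')
    (hderiv : ∀ s x, HasDerivAt (f · x) (f' s x) s) (a b s₀ : ℝ) :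
    HasDerivAt (fun s => ∫ x in a..b, f s x) (∫ x in a..b, f' s₀ x) s₀ := by
  obtain ⟨M, hM⟩ := (isCompact_closedBall s₀ 1 |>.prod isCompact_uIcc).exists_bound_of_continuousOn
    hf'.continuousOn
  have hsec (s : ℝ) : Continuous (f s) := hf.comp (Continuous.prodMk_right s)
  exact (intervalIntegral.hasDerivAt_integral_of_dominated_loc_of_deriv_le (bound := fun _ => M)
    (Metric.ball_mem_nhds s₀ one_pos) (.of_forall fun s => (hsec s).aestronglyMeasurable)
    ((hsec s₀).intervalIntegrable a b)
    (hf'.comp (Continuous.prodMk_right s₀)).aestronglyMeasurable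
    (ae_of_all _ fun x hx s hs =>
      hM (s, x) ⟨Metric.ball_subset_closedBall hs, uIoc_subset_uIcc hx⟩)
    intervalIntegrable_const (ae_of_all _ fun x _ s _ => hderiv s x)).2

theorem hasDerivAt_parametric_intervalIntegral_moving_lowerLimit [CompleteSpace E]
    (hf : Continuous ↿f) (hf' : Continuous ↿f') (hderiv : ∀ s x, HasDerivAt (f · x) (f' s x) s)
    {l : ℝ → ℝ} {l' t : ℝ} (hl : HasDerivAt l l' t) (b : ℝ) :
    HasDerivAt (fun s => ∫ x in l s..b, f s x) ((∫ x in l t..b, f' t x) - l' • f t (l t)) t := by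
  have hsec (s : ℝ) : Continuous (f s) := hf.comp (Continuous.prodMk_right s)
  have hΦ₁ (y s : ℝ) : HasDerivAt (fun y => ∫ x in y..b, f s x) (-f s y) y :=
    intervalIntegral.integral_hasDerivAt_left ((hsec s).intervalIntegrable _ _)
      ((hsec s).stronglyMeasurableAtFilter _ _) (hsec s).continuousAt
  have hΦ₂ (y s : ℝ) : HasDerivAt (fun s => ∫ x in y..b, f s x) (∫ x in y..b, f' s x) s :=
    hasDerivAt_parametric_intervalIntegral hf hf' hderiv _ _ _
  have hΦ := hasStrictFDerivAt_uncurry_coprod (f := fun y s => ∫ x in y..b, f s x)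
    (f₁ := fun y s => (1 : ℝ →L[ℝ] ℝ).smulRight (-f s y))
    (f₂ := fun y s => (1 : ℝ →L[ℝ] ℝ).smulRight (∫ x in y..b, f' s x)) (u := (l t, t))
    (.of_forall fun p => (hΦ₁ p.1 p.2).hasFDerivAt)
    (.of_forall fun p => (hΦ₂ p.1 p.2).hasFDerivAt)
    ((ContinuousLinearMap.smulRightL ℝ ℝ E 1).continuous.comp
      (hf.comp continuous_swap).neg).continuousAt
    ((ContinuousLinearMap.smulRightL ℝ ℝ E 1).continuous.comp
      (continuous_parametric_intervalIntegral_lowerLimit hf' b)).continuousAt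
  refine (hΦ.hasFDerivAt.comp_hasDerivAt (f := fun s => (l s, s)) t
    (hl.prodMk (hasDerivAt_id t))).congr_deriv ?_
  change (1 : ℝ →L[ℝ] ℝ).smulRight (-f t (l t)) l' +
    (1 : ℝ →L[ℝ] ℝ).smulRight (∫ x in l t..b, f' t x) 1 = _
  simp [sub_eq_neg_add]

end ParametricIntegral

section PartialDerivatives

variable {E : Type*} [NormedAddCommGroup E] [NormedSpace ℝ E] {w : ℝ × ℝ → E}
  {w' : ℝ × ℝ →L[ℝ] E} {x s : ℝ}

theorem HasFDerivAt.hasDerivAt_partial_fst (h : HasFDerivAt w w' (x, s)) :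
    HasDerivAt (fun x => w (x, s)) (w' (1, 0)) x :=
  h.comp_hasDerivAt x ((hasDerivAt_id x).prodMk (hasDerivAt_const x s))

theorem HasFDerivAt.hasDerivAt_partial_snd (h : HasFDerivAt w w' (x, s)) :
    HasDerivAt (fun s => w (x, s)) (w' (0, 1)) s :=
  h.comp_hasDerivAt s ((hasDerivAt_const s x).prodMk (hasDerivAt_id s))

end PartialDerivatives

theorem integral_exp_sub_mul_two_mul_deriv {φ φ' : ℝ → ℝ} (hφ : ∀ x, HasDerivAt φ (φ' x) x)
    (hφ' : Continuous φ') (a b c : ℝ) :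
    ∫ x in a..b, exp (x - c) * (2 * φ x * φ' x) =
      exp (b - c) * φ b ^ 2 - exp (a - c) * φ a ^ 2 - ∫ x in a..b, exp (x - c) * φ x ^ 2 := by
  have hφc : Continuous φ := continuous_iff_continuousAt.2 fun x => (hφ x).continuousAt
  simpa using intervalIntegral.integral_mul_deriv_eq_deriv_mul (a := a) (b := b)
    (u := fun x => exp (x - c)) (v := fun x => φ x ^ 2)
    (fun x _ => by simpa using ((hasDerivAt_id x).sub_const c).exp)
    (fun x _ => by simpa [mul_comm] using (hφ x).fun_pow 2)
    ((by fun_prop : Continuous fun x => exp (x - c)).intervalIntegrable _ _)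
    ((by fun_prop : Continuous fun x => 2 * φ x * φ' x).intervalIntegrable _ _)

theorem hasDerivAt_integral_exp_sub_mul_sq_moving_lowerLimit {w : ℝ × ℝ → ℝ}
    (hw : ContDiff ℝ 1 w) {l : ℝ → ℝ} {l' t : ℝ} (hl : HasDerivAt l l' t) (L : ℝ) :
    HasDerivAt (fun s => ∫ x in l s..L, exp (x - L) * w (x, s) ^ 2)
      ((∫ x in l t..L, exp (x - L) * (2 * w (x, t) * fderiv ℝ w (x, t) (0, 1))) -
        l' * (exp (l t - L) * w (l t, t) ^ 2)) t := by
  have hw' (p : ℝ × ℝ) : HasFDerivAt w (fderiv ℝ w p) p :=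
    (hw.differentiable one_ne_zero p).hasFDerivAt
  have hwc : Continuous w := hw.continuous
  have hwt : Continuous fun p => fderiv ℝ w p (0, 1) :=
    (hw.continuous_fderiv one_ne_zero).clm_apply continuous_const
  exact hasDerivAt_parametric_intervalIntegral_moving_lowerLimit
    (f := fun s x => exp (x - L) * w (x, s) ^ 2)
    (f' := fun s x => exp (x - L) * (2 * w (x, s) * fderiv ℝ w (x, s) (0, 1)))
    (by change Continuous fun p : ℝ × ℝ => _; fun_prop)
    (by change Continuous fun p : ℝ × ℝ => _; fun_prop)
    (fun s x => by
      simpa [mul_comm, mul_left_comm] using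
        ((hw' (x, s)).hasDerivAt_partial_snd.fun_pow 2).const_mul (exp (x - L)))
    hl L

theorem weighted_energy_derivative_moving_lower_limit_general
    (u L : ℝ)
    (l : ℝ → ℝ) (hl : Differentiable ℝ l)
    (w F : ℝ × ℝ → ℝ) (hw : ContDiff ℝ 1 w)
    (hpde : ∀ x t : ℝ,
      fderiv ℝ w (x, t) ((0 : ℝ), (1 : ℝ)) -
        u * fderiv ℝ w (x, t) ((1 : ℝ), (0 : ℝ)) = F (x, t)) :
    ∀ t : ℝ,
      HasDerivAt (fun s => ∫ x in (l s)..L, Real.exp (x - L) * (w (x, s)) ^ 2)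
        (-u * (∫ x in (l t)..L, Real.exp (x - L) * (w (x, t)) ^ 2)
          - (u + deriv l t) * Real.exp (l t - L) * (w (l t, t)) ^ 2
          + u * (w (L, t)) ^ 2
          + 2 * ∫ x in (l t)..L, Real.exp (x - L) * w (x, t) * F (x, t)) t := by
  intro t
  simp only [← hpde]
  have leibniz := hasDerivAt_integral_exp_sub_mul_sq_moving_lowerLimit hw (hl t).hasDerivAt L
  set wx : ℝ × ℝ → ℝ := fun p => fderiv ℝ w p (1, 0)
  set wt : ℝ × ℝ → ℝ := fun p => fderiv ℝ w p (0, 1)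
  have hwc : Continuous w := hw.continuous
  have hwx : Continuous wx := (hw.continuous_fderiv one_ne_zero).clm_apply continuous_const
  have hwt : Continuous wt := (hw.continuous_fderiv one_ne_zero).clm_apply continuous_const
  have parts := integral_exp_sub_mul_two_mul_deriv (φ := fun x => w (x, t))
    (fun x => ((hw.differentiable one_ne_zero _).hasFDerivAt).hasDerivAt_partial_fst)
    (by fun_prop : Continuous fun x => wx (x, t)) (l t) L L
  have transport : ∫ x in l t..L, exp (x - L) * (2 * w (x, t) * wt (x, t)) =
      2 * (∫ x in l t..L, exp (x - L) * w (x, t) * (wt (x, t) - u * wx (x, t))) +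
        u * ∫ x in l t..L, exp (x - L) * (2 * w (x, t) * wx (x, t)) := by
    rw [← intervalIntegral.integral_const_mul, ← intervalIntegral.integral_const_mul,
      ← intervalIntegral.integral_add]
    · exact intervalIntegral.integral_congr fun x _ => by ring
    all_goals exact Continuous.intervalIntegrable (by fun_prop) _ _
  refine leibniz.congr_deriv ?_
  rw [transport, parts, sub_self, exp_zero]
  ring

/-- Leibniz rule plus integration by parts for the exponentially weighted
energy on the moving domain `[l(t), L]` of a solution of the leftward
forced transport equation `∂_t w - u ∂_x w = F`. -/
theorem weighted_energy_derivative_moving_lower_limit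
    (u L : ℝ) (hu : 0 < u)
    (l : ℝ → ℝ) (hl : Differentiable ℝ l) (hlL : ∀ t, l t < L)
    (w F : ℝ × ℝ → ℝ) (hw : ContDiff ℝ 1 w)
    (hpde : ∀ x t : ℝ,
      fderiv ℝ w (x, t) ((0 : ℝ), (1 : ℝ)) -
        u * fderiv ℝ w (x, t) ((1 : ℝ), (0 : ℝ)) = F (x, t)) :
    ∀ t : ℝ,
      HasDerivAt (fun s => ∫ x in (l s)..L, Real.exp (x - L) * (w (x, s)) ^ 2)
        (-u * (∫ x in (l t)..L, Real.exp (x - L) * (w (x, t)) ^ 2)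
          - (u + deriv l t) * Real.exp (l t - L) * (w (l t, t)) ^ 2
          + u * (w (L, t)) ^ 2
          + 2 * ∫ x in (l t)..L, Real.exp (x - L) * w (x, t) * F (x, t)) t :=
  weighted_energy_derivative_moving_lower_limit_general u L l hl w F hw hpde
end
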